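/- arXiv:1901.08227 — 6 statements merged into one kernel-verified Lean document; each statement's English description precedes it below -/
import Mathlib

section
/- Let v ∈ ℝ^D be nonzero with R := max_d |v_d|. For ANY random vector Q̂ ∈ ℝ^D whose coordinates almost surely take values in {−R, 0, R} and which is unbiased, E[Q̂] = v, one has E[‖Q̂‖₂²] ≥ R · Σ_{d=1}^{D} |v_d|. Consequently, the randomized ternary coding Q[v], which achieves E[‖Q[v]‖₂²] = R · Σ_d |v_d|, minimizes the expected squared norm (equivalently, the compression variance) among all unbiased ternary codings with levels {−R, 0, R}; that is, choosing P(Q_d = R·sign(v_d)) proportional to |v_d| is optimal. -/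
open MeasureTheory

lemma intdirac (f : ℝ → ℝ) (a : ℝ) : Integrable f (Measure.dirac a) := by
  have h : f =ᵐ[Measure.dirac a] fun _ => f a := by
    rw [MeasureTheory.ae_dirac_eq]; exact Filter.eventually_pure.2 rfl
  exact (integrable_const (f a)).congr h.symm


/-- Optimality of the randomized ternary coding. For a nonzero vector `v`
with `R = max_d |v d|`, any random vector `Qhat` whose coordinates almost surely take
values in `{-R, 0, R}` and which is unbiased (`E[Qhat] = v` coordinatewise) satisfies
`E[‖Qhat‖₂²] ≥ R * ∑ d, |v d|`.  Consequently the randomized ternary coding `Q[v]`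
(coordinate `d` equals `R * sign (v d)` with probability `|v d| / R` and `0` otherwise),
which achieves `E[‖Q[v]‖₂²] = R * ∑ d, |v d|`, minimizes the expected squared norm among
all unbiased ternary codings with levels `{-R, 0, R}`. -/
theorem ternary_coding_optimal
    {D : ℕ} {Ω : Type*} [MeasurableSpace Ω]
    (μ : Measure Ω) [IsProbabilityMeasure μ]
    (v : EuclideanSpace ℝ (Fin D)) (hv : v ≠ 0)
    (R : ℝ) (hR : IsGreatest (Set.range fun d => |v d|) R)
    -- an arbitrary unbiased ternary coding with levels {-R, 0, R}
    (Qhat : Ω → EuclideanSpace ℝ (Fin D)) (hQhatmeas : Measurable Qhat)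
    (hQhatlevels : ∀ᵐ ω ∂μ, ∀ d : Fin D, Qhat ω d ∈ ({-R, 0, R} : Set ℝ))
    (hQhatunbiased : ∀ d : Fin D, ∫ ω, Qhat ω d ∂μ = v d)
    -- the randomized ternary coding Q[v]
    (Q : Ω → EuclideanSpace ℝ (Fin D)) (hQmeas : Measurable Q)
    (hlaw : ∀ d : Fin D,
      Measure.map (fun ω => Q ω d) μ =
        ENNReal.ofReal (|v d| / R) • Measure.dirac (R * Real.sign (v d)) +
        ENNReal.ofReal (1 - |v d| / R) • Measure.dirac (0 : ℝ)) :
    R * ∑ d : Fin D, |v d| ≤ ∫ ω, ‖Qhat ω‖ ^ 2 ∂μ ∧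
      ∫ ω, ‖Q ω‖ ^ 2 ∂μ = R * ∑ d : Fin D, |v d| := by
  -- basic facts about R
  obtain ⟨hRmem, hRub⟩ := hR
  obtain ⟨d0, hd0⟩ := hRmem
  have hRnonneg : 0 ≤ R := hd0 ▸ abs_nonneg _
  have hRpos : 0 < R := by
    rcases hRnonneg.lt_or_eq with h | h
    · exact h
    · exfalso; apply hv
      ext d
      have := hRub ⟨d, rfl⟩
      have : |v d| = 0 := le_antisymm (h ▸ this) (abs_nonneg _)
      simpa [abs_eq_zero] using this
  have hle : ∀ d : Fin D, |v d| ≤ R := fun d => hRub ⟨d, rfl⟩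
  -- norm squared as sum of squares
  have hnorm : ∀ x : EuclideanSpace ℝ (Fin D), ‖x‖ ^ 2 = ∑ d, (x d) ^ 2 := by
    intro x
    rw [EuclideanSpace.norm_eq, Real.sq_sqrt (by positivity)]
    simp [Real.norm_eq_abs, sq_abs]
  constructor
  · -- lower bound for Qhat
    have hmd : ∀ d : Fin D, Measurable fun ω => Qhat ω d :=
      fun d => (measurable_pi_apply d).comp ((WithLp.measurable_ofLp _ _).comp hQhatmeas)
    have hbound : ∀ d : Fin D, ∀ᵐ ω ∂μ, |Qhat ω d| ≤ R := by
      intro d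
      filter_upwards [hQhatlevels] with ω hω
      rcases hω d with h | h | h <;> rw [h] <;>
        simp [abs_of_nonneg hRnonneg, hRnonneg]
    have hint : ∀ d : Fin D, Integrable (fun ω => Qhat ω d) μ := by
      intro d
      refine (integrable_const R).mono' (hmd d).aestronglyMeasurable ?_
      filter_upwards [hbound d] with ω hω
      simpa using hω
    have hintsq : ∀ d : Fin D, Integrable (fun ω => (Qhat ω d) ^ 2) μ := by
      intro d
      refine (integrable_const (R ^ 2)).mono' ((hmd d).pow_const 2).aestronglyMeasurable ?_
      filter_upwards [hbound d] with ω hω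
      rw [Real.norm_eq_abs, abs_pow]
      exact pow_le_pow_left₀ (abs_nonneg _) hω 2
    have hsq : ∀ d : Fin D, ∀ᵐ ω ∂μ, (Qhat ω d) ^ 2 = R * |Qhat ω d| := by
      intro d
      filter_upwards [hQhatlevels] with ω hω
      rcases hω d with h | h | h <;> rw [h] <;>
        simp [abs_of_nonneg hRnonneg, sq, abs_neg]
    have key : ∀ d : Fin D, R * |v d| ≤ ∫ ω, (Qhat ω d) ^ 2 ∂μ := by
      intro d
      rw [integral_congr_ae (hsq d), integral_const_mul]
      have h1 : |v d| ≤ ∫ ω, |Qhat ω d| ∂μ := by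
        rw [← hQhatunbiased d]
        simpa [Real.norm_eq_abs] using
          norm_integral_le_integral_norm (μ := μ) (fun ω => Qhat ω d)
      exact mul_le_mul_of_nonneg_left h1 hRnonneg
    calc R * ∑ d : Fin D, |v d| = ∑ d : Fin D, R * |v d| := by rw [Finset.mul_sum]
      _ ≤ ∑ d : Fin D, ∫ ω, (Qhat ω d) ^ 2 ∂μ := Finset.sum_le_sum fun d _ => key d
      _ = ∫ ω, ∑ d : Fin D, (Qhat ω d) ^ 2 ∂μ :=
          (integral_finset_sum _ fun d _ => hintsq d).symm
      _ = ∫ ω, ‖Qhat ω‖ ^ 2 ∂μ := by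
          exact integral_congr_ae (Filter.Eventually.of_forall fun ω => (hnorm _).symm)
  · -- exact value for Q
    have hmd : ∀ d : Fin D, Measurable fun ω => Q ω d :=
      fun d => (measurable_pi_apply d).comp ((WithLp.measurable_ofLp _ _).comp hQmeas)
    -- each coordinate's squared integral via the law
    have hcoord : ∀ d : Fin D, ∫ ω, (Q ω d) ^ 2 ∂μ = R * |v d| := by
      intro d
      have hm2 : Measurable fun x : ℝ => x ^ 2 := by fun_prop
      have hmap : ∫ ω, (Q ω d) ^ 2 ∂μ = ∫ x, x ^ 2 ∂(Measure.map (fun ω => Q ω d) μ) :=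
        (integral_map (hmd d).aemeasurable hm2.aestronglyMeasurable).symm
      rw [hmap, hlaw d]
      have hc1 : (ENNReal.ofReal (|v d| / R)).toReal = |v d| / R :=
        ENNReal.toReal_ofReal (by positivity)
      have hc2 : (ENNReal.ofReal (1 - |v d| / R)).toReal = 1 - |v d| / R :=
        ENNReal.toReal_ofReal (by
          have := (div_le_one hRpos).2 (hle d); linarith)
      rw [integral_add_measure ((intdirac _ _).smul_measure (by simp))
        ((intdirac _ _).smul_measure (by simp)),
        integral_smul_measure, integral_smul_measure, integral_dirac, integral_dirac,
        hc1, hc2]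
      rcases eq_or_ne (v d) 0 with h | h
      · simp [h]
      · have hs : (Real.sign (v d)) ^ 2 = 1 := by
          rcases Real.sign_apply_eq_of_ne_zero _ h with hs | hs <;> rw [hs] <;> ring
        rw [mul_pow, hs, mul_one]
        field_simp
        ring_nf
        field_simp
    -- ae boundedness for integrability
    have hbound : ∀ d : Fin D, ∀ᵐ ω ∂μ, |Q ω d| ≤ R := by
      intro d
      have hS : MeasurableSet ({R * Real.sign (v d), 0} : Set ℝ) := by
        measurability
      have h0 : μ ((fun ω => Q ω d) ⁻¹' ({R * Real.sign (v d), 0} : Set ℝ)ᶜ) = 0 := by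
        rw [← Measure.map_apply (hmd d) hS.compl, hlaw d]
        simp [Measure.dirac_apply', hS.compl, Set.indicator]
      have : ∀ᵐ ω ∂μ, Q ω d ∈ ({R * Real.sign (v d), 0} : Set ℝ) := by
        rw [ae_iff]
        simpa [Set.preimage] using h0
      filter_upwards [this] with ω hω
      have habs : |Real.sign (v d)| ≤ 1 := by
        rcases lt_trichotomy (v d) 0 with h' | h' | h'
        · rw [Real.sign_of_neg h']; norm_num
        · rw [h', Real.sign_zero]; norm_num
        · rw [Real.sign_of_pos h']; norm_num
      rcases hω with h | h <;> rw [h]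
      · rw [abs_mul, abs_of_nonneg hRnonneg]
        calc R * |Real.sign (v d)| ≤ R * 1 := mul_le_mul_of_nonneg_left habs hRnonneg
          _ = R := mul_one R
      · simpa using hRnonneg
    have hintsq : ∀ d : Fin D, Integrable (fun ω => (Q ω d) ^ 2) μ := by
      intro d
      refine (integrable_const (R ^ 2)).mono' ((hmd d).pow_const 2).aestronglyMeasurable ?_
      filter_upwards [hbound d] with ω hω
      rw [Real.norm_eq_abs, abs_pow]
      exact pow_le_pow_left₀ (abs_nonneg _) hω 2
    calc ∫ ω, ‖Q ω‖ ^ 2 ∂μ = ∫ ω, ∑ d : Fin D, (Q ω d) ^ 2 ∂μ := by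
          exact integral_congr_ae (Filter.Eventually.of_forall fun ω => hnorm _)
      _ = ∑ d : Fin D, ∫ ω, (Q ω d) ^ 2 ∂μ := integral_finset_sum _ fun d _ => hintsq d
      _ = ∑ d : Fin D, R * |v d| := Finset.sum_congr rfl fun d _ => hcoord d
      _ = R * ∑ d : Fin D, |v d| := (Finset.mul_sum _ _ _).symm
end

section
/- Let v ∈ ℝ^D be nonzero with R := max_d |v_d| and let Q[v] be its randomized ternary coding. Then the expected squared compression error equals E[‖Q[v] − v‖₂²] = R · Σ_{d=1}^{D} |v_d| − ‖v‖₂². -/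
open MeasureTheory

lemma integrable_dirac_aux {α : Type*} [MeasurableSpace α] (f : α → ℝ) (a : α)
    (hf : StronglyMeasurable f) : Integrable f (Measure.dirac a) :=
  (integrable_const (f a)).congr (ae_eq_dirac' hf.measurable).symm

lemma coord_integral_aux {α : Type*} [MeasurableSpace α] (μ : Measure α)
    (g : α → ℝ) (hg : Measurable g) (f : ℝ → ℝ) (hf : Measurable f)
    (c₁ c₂ : ENNReal) (hc₁ : c₁ ≠ ⊤) (hc₂ : c₂ ≠ ⊤) (a b : ℝ)
    (hmap : Measure.map g μ = c₁ • Measure.dirac a + c₂ • Measure.dirac b) :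
    (∫ x, f (g x) ∂μ) = c₁.toReal * f a + c₂.toReal * f b ∧
      Integrable (fun x => f (g x)) μ := by
  have hInt : Integrable f (Measure.map g μ) := by
    rw [hmap]
    refine Integrable.add_measure ?_ ?_
    · exact ((integrable_dirac_aux f a hf.stronglyMeasurable)).smul_measure hc₁
    · exact ((integrable_dirac_aux f b hf.stronglyMeasurable)).smul_measure hc₂
  constructor
  · rw [← integral_map hg.aemeasurable hf.aestronglyMeasurable.aemeasurable.aestronglyMeasurable,
      hmap, integral_add_measure
        (((integrable_dirac_aux f a hf.stronglyMeasurable)).smul_measure hc₁)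
        (((integrable_dirac_aux f b hf.stronglyMeasurable)).smul_measure hc₂),
      integral_smul_measure, integral_smul_measure,
      integral_dirac' f a hf.stronglyMeasurable, integral_dirac' f b hf.stronglyMeasurable]
    simp [smul_eq_mul]
  · exact (integrable_map_measure hf.aestronglyMeasurable.aemeasurable.aestronglyMeasurable
      hg.aemeasurable).mp hInt

/-- For the randomized ternary coding `Q` of a nonzero vector `v`
with `R = max_d |v d|`, the expected squared compression error equals
`E[‖Q[v] - v‖₂²] = R * ∑ d, |v d| - ‖v‖₂²`. -/
theorem ternary_coding_compression_error
    {D : ℕ} {Ω : Type*} [MeasurableSpace Ω]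
    (μ : Measure Ω) [IsProbabilityMeasure μ]
    (v : EuclideanSpace ℝ (Fin D)) (hv : v ≠ 0)
    (R : ℝ) (hR : IsGreatest (Set.range fun d => |v d|) R)
    (Q : Ω → EuclideanSpace ℝ (Fin D)) (hQmeas : Measurable Q)
    (hlaw : ∀ d : Fin D,
      Measure.map (fun ω => Q ω d) μ =
        ENNReal.ofReal (|v d| / R) • Measure.dirac (R * Real.sign (v d)) +
        ENNReal.ofReal (1 - |v d| / R) • Measure.dirac (0 : ℝ)) :
    ∫ ω, ‖Q ω - v‖ ^ 2 ∂μ = R * (∑ d : Fin D, |v d|) - ‖v‖ ^ 2 := by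
  -- R > 0
  have hle : ∀ d, |v d| ≤ R := fun d => hR.2 ⟨d, rfl⟩
  have hRpos : 0 < R := by
    obtain ⟨d, hd⟩ : ∃ d, v d ≠ 0 := by
      by_contra h
      push_neg at h
      exact hv (by ext d; simpa using h d)
    exact lt_of_lt_of_le (abs_pos.mpr hd) (hle d)
  have hcoordmeas : ∀ d : Fin D, Measurable fun ω => Q ω d := fun d =>
    (measurable_pi_apply d).comp ((WithLp.measurable_ofLp _ _).comp hQmeas)
  -- per-coordinate facts
  have key : ∀ d : Fin D,
      (∫ ω, (Q ω d - v d) ^ 2 ∂μ) = R * |v d| - (v d) ^ 2 ∧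
        Integrable (fun ω => (Q ω d - v d) ^ 2) μ := by
    intro d
    have hf : Measurable fun x : ℝ => (x - v d) ^ 2 :=
      ((measurable_id.sub measurable_const).pow measurable_const)
    have h := coord_integral_aux μ (fun ω => Q ω d) (hcoordmeas d)
      (fun x => (x - v d) ^ 2) hf
      (ENNReal.ofReal (|v d| / R)) (ENNReal.ofReal (1 - |v d| / R))
      ENNReal.ofReal_ne_top ENNReal.ofReal_ne_top
      (R * Real.sign (v d)) 0 (hlaw d)
    refine ⟨?_, h.2⟩
    rw [h.1, ENNReal.toReal_ofReal (by positivity),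
      ENNReal.toReal_ofReal (by
        have := hle d
        have : |v d| / R ≤ 1 := (div_le_one hRpos).mpr this
        linarith)]
    rcases eq_or_ne (v d) 0 with h0 | h0
    · simp [h0]
    · have hs2 : Real.sign (v d) * Real.sign (v d) = 1 := by
        rcases Real.sign_apply_eq_of_ne_zero _ h0 with h | h <;> rw [h] <;> ring
      have hsa : Real.sign (v d) * v d = |v d| := by
        rcases lt_trichotomy (v d) 0 with h | h | h
        · rw [Real.sign_of_neg h, abs_of_neg h]; ring
        · exact absurd h h0
        · rw [Real.sign_of_pos h, abs_of_pos h]; ring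
      have habs2 : |v d| * |v d| = v d * v d := by
        rw [← abs_mul, abs_of_nonneg (mul_self_nonneg _)]
      have hexp : (R * Real.sign (v d) - v d) ^ 2 = R ^ 2 - 2 * R * |v d| + (v d) ^ 2 := by
        linear_combination R ^ 2 * hs2 - 2 * R * hsa
      beta_reduce
      rw [hexp]
      field_simp
      linear_combination (-2 * R) * habs2
  -- norm expansion
  have hnorm : ∀ ω, ‖Q ω - v‖ ^ 2 = ∑ d : Fin D, (Q ω d - v d) ^ 2 := by
    intro ω
    rw [EuclideanSpace.norm_eq, Real.sq_sqrt (by positivity)]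
    congr 1
    ext d
    simp [Real.norm_eq_abs, sq_abs]
  have hnormv : ‖v‖ ^ 2 = ∑ d : Fin D, (v d) ^ 2 := by
    rw [EuclideanSpace.norm_eq, Real.sq_sqrt (by positivity)]
    simp [Real.norm_eq_abs, sq_abs]
  calc ∫ ω, ‖Q ω - v‖ ^ 2 ∂μ
      = ∫ ω, ∑ d : Fin D, (Q ω d - v d) ^ 2 ∂μ := by simp_rw [hnorm]
    _ = ∑ d : Fin D, ∫ ω, (Q ω d - v d) ^ 2 ∂μ :=
        integral_finset_sum _ (fun d _ => (key d).2)
    _ = ∑ d : Fin D, (R * |v d| - (v d) ^ 2) := by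
        exact Finset.sum_congr rfl fun d _ => (key d).1
    _ = R * (∑ d : Fin D, |v d|) - ‖v‖ ^ 2 := by
        rw [Finset.sum_sub_distrib, ← Finset.mul_sum, hnormv]
end

section
/- Let v ∈ ℝ^D be nonzero with R := max_d |v_d| and let Q[v] be its randomized ternary coding. Then the expected squared compression error is bounded by E[‖Q[v] − v‖₂²] ≤ (√D − 1) · ‖v‖₂²; i.e., the randomized ternary coding satisfies the bounded-compression-error assumption with constant C_q = √D − 1. -/
/-!
Coordinatewise, `Q_d - v_d` takes the value `R sign(v_d) - v_d` with probability `|v_d| / R` and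
`-v_d` otherwise, so `E (Q_d - v_d)² = R |v_d| - v_d²`. Summing, `E ‖Q - v‖² = R ‖v‖₁ - ‖v‖²`, and
`R ≤ ‖v‖` together with Cauchy–Schwarz `‖v‖₁ ≤ √D ‖v‖` gives the bound.
-/

open MeasureTheory Finset

section TwoPointLaw

variable {Ω E F : Type*} [MeasurableSpace Ω] [MeasurableSpace E] [NormedAddCommGroup F]
  {μ : Measure Ω} {X : Ω → E} {p : ℝ} {a b : E} {g : E → F}

lemma twoPoint_measure_ne_zero (p : ℝ) (a b : E) :
    ENNReal.ofReal p • Measure.dirac a + ENNReal.ofReal (1 - p) • Measure.dirac b ≠ 0 := by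
  intro h
  have hmass := congrArg (fun ν : Measure E => ν Set.univ) h
  simp only [Measure.coe_add, Measure.coe_smul, Pi.add_apply, Pi.smul_apply, measure_univ,
    smul_eq_mul, mul_one, Measure.coe_zero, Pi.zero_apply, add_eq_zero,
    ENNReal.ofReal_eq_zero] at hmass
  linarith [hmass.1, hmass.2]

lemma integrable_smul_dirac (c : ℝ) (a : E) (hg : StronglyMeasurable g) :
    Integrable g (ENNReal.ofReal c • Measure.dirac a) :=
  (integrable_dirac' hg enorm_lt_top).smul_measure ENNReal.ofReal_ne_top

lemma aemeasurable_of_map_eq_twoPoint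
    (hlaw : μ.map X =
      ENNReal.ofReal p • Measure.dirac a + ENNReal.ofReal (1 - p) • Measure.dirac b) :
    AEMeasurable X μ :=
  -- `Measure.map` along a map that is not a.e.-measurable is `0`.
  .of_map_ne_zero (hlaw ▸ twoPoint_measure_ne_zero p a b)

lemma integrable_comp_of_map_eq_twoPoint
    (hlaw : μ.map X =
      ENNReal.ofReal p • Measure.dirac a + ENNReal.ofReal (1 - p) • Measure.dirac b)
    (hg : StronglyMeasurable g) : Integrable (fun ω => g (X ω)) μ := by
  refine (integrable_map_measure hg.aestronglyMeasurable
    (aemeasurable_of_map_eq_twoPoint hlaw)).mp ?_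
  rw [hlaw]
  exact (integrable_smul_dirac p a hg).add_measure (integrable_smul_dirac (1 - p) b hg)

lemma integral_comp_of_map_eq_twoPoint [NormedSpace ℝ F] [CompleteSpace F]
    (hp₀ : 0 ≤ p) (hp₁ : p ≤ 1)
    (hlaw : μ.map X =
      ENNReal.ofReal p • Measure.dirac a + ENNReal.ofReal (1 - p) • Measure.dirac b)
    (hg : StronglyMeasurable g) :
    ∫ ω, g (X ω) ∂μ = p • g a + (1 - p) • g b := by
  rw [← integral_map (aemeasurable_of_map_eq_twoPoint hlaw) hg.aestronglyMeasurable, hlaw,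
    integral_add_measure (integrable_smul_dirac p a hg) (integrable_smul_dirac (1 - p) b hg),
    integral_smul_measure, integral_smul_measure, integral_dirac' _ _ hg,
    integral_dirac' _ _ hg, ENNReal.toReal_ofReal hp₀, ENNReal.toReal_ofReal (sub_nonneg.2 hp₁)]

end TwoPointLaw

lemma ternary_sq_error_eq {R x : ℝ} (hx : |x| ≤ R) :
    |x| / R * (R * Real.sign x - x) ^ 2 + (1 - |x| / R) * (0 - x) ^ 2 = |x| * R - x ^ 2 := by
  rcases eq_or_ne x 0 with rfl | hx₀
  · simp
  have hR : R ≠ 0 := (lt_of_lt_of_le (abs_pos.2 hx₀) hx).ne'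
  rcases hx₀.lt_or_gt with h | h
  · rw [Real.sign_of_neg h, abs_of_neg h]; field_simp; ring
  · rw [Real.sign_of_pos h, abs_of_pos h]; field_simp; ring

lemma integral_sq_sub_of_map_eq_ternary {Ω : Type*} [MeasurableSpace Ω] {μ : Measure Ω}
    {X : Ω → ℝ} {R x : ℝ} (hx : |x| ≤ R)
    (hlaw : μ.map X = ENNReal.ofReal (|x| / R) • Measure.dirac (R * Real.sign x) +
      ENNReal.ofReal (1 - |x| / R) • Measure.dirac 0) :
    ∫ ω, (X ω - x) ^ 2 ∂μ = |x| * R - x ^ 2 := by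
  have hR : 0 ≤ R := (abs_nonneg x).trans hx
  rw [integral_comp_of_map_eq_twoPoint (g := fun y => (y - x) ^ 2) (by positivity)
    (div_le_one_of_le₀ hx hR) hlaw (by fun_prop)]
  exact ternary_sq_error_eq hx

lemma EuclideanSpace.sum_abs_le_sqrt_card_mul_norm {ι : Type*} [Fintype ι]
    (v : EuclideanSpace ℝ ι) : ∑ i, |v i| ≤ √(Fintype.card ι) * ‖v‖ := by
  simpa [EuclideanSpace.norm_eq, mul_comm] using
    Real.sum_mul_le_sqrt_mul_sqrt univ (fun i => |v i|) 1

theorem ternary_coding_compression_error_bound_general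
    {D : ℕ} {Ω : Type*} [MeasurableSpace Ω]
    (μ : Measure Ω)
    (v : EuclideanSpace ℝ (Fin D))
    (R : ℝ) (hR : IsGreatest (Set.range fun d => |v d|) R)
    (Q : Ω → EuclideanSpace ℝ (Fin D))
    (hlaw : ∀ d : Fin D,
      Measure.map (fun ω => Q ω d) μ =
        ENNReal.ofReal (|v d| / R) • Measure.dirac (R * Real.sign (v d)) +
        ENNReal.ofReal (1 - |v d| / R) • Measure.dirac (0 : ℝ)) :
    ∫ ω, ‖Q ω - v‖ ^ 2 ∂μ ≤ (Real.sqrt D - 1) * ‖v‖ ^ 2 := by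
  have hle : ∀ d, |v d| ≤ R := fun d => hR.2 ⟨d, rfl⟩
  obtain ⟨hR₀, hR_le⟩ : 0 ≤ R ∧ R ≤ ‖v‖ := by
    obtain ⟨d, rfl⟩ := hR.1
    simpa using PiLp.norm_apply_le v d
  calc ∫ ω, ‖Q ω - v‖ ^ 2 ∂μ = ∑ d, ∫ ω, (Q ω d - v d) ^ 2 ∂μ := by
        simp only [EuclideanSpace.real_norm_sq_eq, PiLp.sub_apply]
        exact integral_finsetSum _ fun d _ =>
          integrable_comp_of_map_eq_twoPoint (hlaw d) (g := fun y => (y - v d) ^ 2) (by fun_prop)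
    _ = (∑ d, |v d|) * R - ‖v‖ ^ 2 := by
        simp only [fun d => integral_sq_sub_of_map_eq_ternary (hle d) (hlaw d), sum_sub_distrib,
          sum_mul, EuclideanSpace.real_norm_sq_eq]
    _ ≤ (√D * ‖v‖) * ‖v‖ - ‖v‖ ^ 2 := by
        gcongr
        simpa using v.sum_abs_le_sqrt_card_mul_norm
    _ = (√D - 1) * ‖v‖ ^ 2 := by ring

/-- For the randomized ternary coding `Q` of a nonzero vector `v`
with `R = max_d |v d|`, the expected squared compression error is bounded as
`E[‖Q[v] - v‖₂²] ≤ (√D - 1) * ‖v‖₂²`, i.e. the ternary coding satisfies the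
bounded-compression-error assumption with constant `C_q = √D - 1`. -/
theorem ternary_coding_compression_error_bound
    {D : ℕ} {Ω : Type*} [MeasurableSpace Ω]
    (μ : Measure Ω) [IsProbabilityMeasure μ]
    (v : EuclideanSpace ℝ (Fin D)) (hv : v ≠ 0)
    (R : ℝ) (hR : IsGreatest (Set.range fun d => |v d|) R)
    (Q : Ω → EuclideanSpace ℝ (Fin D)) (hQmeas : Measurable Q)
    (hlaw : ∀ d : Fin D,
      Measure.map (fun ω => Q ω d) μ =
        ENNReal.ofReal (|v d| / R) • Measure.dirac (R * Real.sign (v d)) +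
        ENNReal.ofReal (1 - |v d| / R) • Measure.dirac (0 : ℝ)) :
    ∫ ω, ‖Q ω - v‖ ^ 2 ∂μ ≤ (Real.sqrt D - 1) * ‖v‖ ^ 2 :=
  ternary_coding_compression_error_bound_general μ v R hR Q hlaw
end

section
/- Let F(w) = (1/N) Σ_{n=1}^{N} f_n(w) where each f_n : ℝ^D → ℝ is convex and differentiable with L-Lipschitz gradient, and let w⋆ be a global minimizer of F. Define σ² := (1/N) Σ_{n=1}^{N} ‖∇f_n(w⋆)‖₂² (the second moment of the stochastic gradient at the optimum, for a uniformly sampled index). Then for every w ∈ ℝ^D, the second moment of the stochastic gradient g(w) = ∇f_n(w) with n uniform on {1,…,N} satisfies (1/N) Σ_{n=1}^{N} ‖∇f_n(w)‖₂² ≤ 4L·(F(w) − F(w⋆)) + 2σ². -/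
open scoped RealInnerProductSpace

section Aux

variable {E : Type*} [NormedAddCommGroup E] [InnerProductSpace ℝ E] [CompleteSpace E]

private lemma line_hasDerivAt {f : E → ℝ} {f' : E → E}
    (hg : ∀ x, HasGradientAt f (f' x) x) (x v : E) (t : ℝ) :
    HasDerivAt (fun s : ℝ => f (x + s • v)) ⟪f' (x + t • v), v⟫ t := by
  have hc : HasDerivAt (fun s : ℝ => x + s • v) v t := by
    simpa using ((hasDerivAt_id t).smul_const v).const_add x
  have h1 := (hasGradientAt_iff_hasFDerivAt.mp (hg (x + t • v))).comp_hasDerivAt t hc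
  exact h1

private lemma lip_continuous {f' : E → E} {L : ℝ} (hL : 0 ≤ L)
    (hlip : ∀ x y, ‖f' x - f' y‖ ≤ L * ‖x - y‖) : Continuous f' := by
  have : LipschitzWith ⟨L, hL⟩ f' := by
    apply LipschitzWith.of_dist_le_mul
    intro a b
    rw [dist_eq_norm, dist_eq_norm]; exact hlip a b
  exact this.continuous

private lemma descent {f : E → ℝ} {f' : E → E} {L : ℝ} (hL : 0 ≤ L)
    (hg : ∀ x, HasGradientAt f (f' x) x)
    (hlip : ∀ x y, ‖f' x - f' y‖ ≤ L * ‖x - y‖) (x y : E) :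
    f y ≤ f x + ⟪f' x, y - x⟫ + L / 2 * ‖y - x‖ ^ 2 := by
  set v := y - x with hv
  have hcont : Continuous f' := lip_continuous hL hlip
  have hgcont : Continuous fun t : ℝ => ⟪f' (x + t • v), v⟫ := by
    exact (continuous_inner.comp
      (((hcont.comp (continuous_const.add (continuous_id.smul continuous_const)))).prodMk
        continuous_const))
  set c : ℝ := ⟪f' x, v⟫ with hc
  set a : ℝ := L * ‖v‖ ^ 2 with ha
  have hconta : Continuous fun t : ℝ => c + a * t := by fun_prop
  have hkey : ∫ t in (0:ℝ)..1, ⟪f' (x + t • v), v⟫ = f (x + (1:ℝ) • v) - f (x + (0:ℝ) • v) :=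
    intervalIntegral.integral_eq_sub_of_hasDerivAt (fun t _ => line_hasDerivAt hg x v t)
      (hgcont.intervalIntegrable 0 1)
  have hbound : ∫ t in (0:ℝ)..1, ⟪f' (x + t • v), v⟫ ≤
      ∫ t in (0:ℝ)..1, (c + a * t) := by
    apply intervalIntegral.integral_mono_on zero_le_one
      (hgcont.intervalIntegrable 0 1) (hconta.intervalIntegrable 0 1)
    intro t ht
    have h1 : ⟪f' (x + t • v) - f' x, v⟫ ≤ ‖f' (x + t • v) - f' x‖ * ‖v‖ :=
      real_inner_le_norm _ _
    have h2 : ‖f' (x + t • v) - f' x‖ ≤ L * (t * ‖v‖) := by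
      have := hlip (x + t • v) x
      simpa [norm_smul, abs_of_nonneg ht.1] using this
    have h3 : ⟪f' (x + t • v), v⟫ = c + ⟪f' (x + t • v) - f' x, v⟫ := by
      rw [hc, ← inner_add_left, add_sub_cancel]
    have h4 : ‖f' (x + t • v) - f' x‖ * ‖v‖ ≤ L * (t * ‖v‖) * ‖v‖ :=
      mul_le_mul_of_nonneg_right h2 (norm_nonneg _)
    rw [h3, ha]
    nlinarith
  have hrhs : ∫ t in (0:ℝ)..1, (c + a * t) = c + a / 2 := by
    rw [intervalIntegral.integral_add intervalIntegrable_const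
      ((by fun_prop : Continuous fun t : ℝ => a * t).intervalIntegrable 0 1)]
    have h5 : ∫ t in (0:ℝ)..1, a * t = a / 2 := by
      rw [intervalIntegral.integral_const_mul]
      norm_num
      ring
    rw [h5]
    simp
  have hfin : f (x + (1:ℝ) • v) - f (x + (0:ℝ) • v) ≤ c + a / 2 := by
    rw [← hkey, ← hrhs]; exact hbound
  have hx1 : x + (1:ℝ) • v = y := by rw [hv]; module
  have hx0 : x + (0:ℝ) • v = x := by simp
  rw [hx1, hx0] at hfin
  rw [hc, ha] at hfin
  linarith

private lemma grad_ineq {f : E → ℝ} {f' : E → E}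
    (hconv : ConvexOn ℝ Set.univ f)
    (hg : ∀ x, HasGradientAt f (f' x) x) (x y : E) :
    f x + ⟪f' x, y - x⟫ ≤ f y := by
  have hd : HasDerivAt (fun s : ℝ => f (x + s • (y - x))) ⟪f' x, y - x⟫ 0 := by
    simpa using line_hasDerivAt hg x (y - x) 0
  have htend : Filter.Tendsto (slope (fun s : ℝ => f (x + s • (y - x))) 0)
      (nhdsWithin 0 (Set.Ioi 0)) (nhds ⟪f' x, y - x⟫) :=
    (hasDerivAt_iff_tendsto_slope.mp hd).mono_left
      (nhdsWithin_mono 0 (fun t ht => ne_of_gt ht))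
  have hev : ∀ᶠ t in nhdsWithin (0:ℝ) (Set.Ioi 0),
      slope (fun s : ℝ => f (x + s • (y - x))) 0 t ≤ f y - f x := by
    filter_upwards [Ioo_mem_nhdsGT_of_mem (Set.mem_Ico.mpr ⟨le_refl _, zero_lt_one⟩)]
      with t ht
    have hcomb : x + t • (y - x) = (1 - t) • x + t • y := by module
    have hle : f (x + t • (y - x)) ≤ (1 - t) * f x + t * f y := by
      rw [hcomb]
      exact hconv.2 (Set.mem_univ x) (Set.mem_univ y) (by linarith [ht.2])
        (le_of_lt ht.1) (by ring)
    rw [slope_def_field]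
    simp only [sub_zero, zero_smul, add_zero]
    rw [div_le_iff₀ ht.1]
    nlinarith
  have := le_of_tendsto htend hev
  linarith

private lemma cocoercive {f : E → ℝ} {f' : E → E} {L : ℝ} (hL : 0 < L)
    (hconv : ConvexOn ℝ Set.univ f)
    (hg : ∀ x, HasGradientAt f (f' x) x)
    (hlip : ∀ x y, ‖f' x - f' y‖ ≤ L * ‖x - y‖) (x y : E) :
    ‖f' y - f' x‖ ^ 2 ≤ 2 * L * (f y - f x - ⟪f' x, y - x⟫) := by
  set h : E → ℝ := fun z => f z - ⟪f' x, z⟫ with hh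
  set h' : E → E := fun z => f' z - f' x with hh'
  have hg' : ∀ z, HasGradientAt h (h' z) z := by
    intro z
    have h1 := hasGradientAt_iff_hasFDerivAt.mp (hg z)
    have h2 : HasFDerivAt (fun z : E => ⟪f' x, z⟫)
        ((InnerProductSpace.toDual ℝ E) (f' x)) z := by
      exact
        ((InnerProductSpace.toDual ℝ E) (f' x)).hasFDerivAt (x := z)
    exact hasGradientAt_iff_hasFDerivAt.mpr (by rw [map_sub]; exact h1.sub h2)
  have hconv' : ConvexOn ℝ Set.univ h := by
    apply hconv.sub
    refine ⟨convex_univ, fun a _ b _ p q hp hq hpq => le_of_eq ?_⟩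
    simp [inner_add_right, inner_smul_right]
  have hlip' : ∀ a b, ‖h' a - h' b‖ ≤ L * ‖a - b‖ := by
    intro a b
    simpa [hh', sub_sub_sub_cancel_right] using hlip a b
  have hmin : ∀ z, h x ≤ h z := by
    intro z
    have := grad_ineq hconv' hg' x z
    simpa [hh', sub_self] using this
  have hdes := descent hL.le hg' hlip' y (y - L⁻¹ • h' y)
  have hsub : y - L⁻¹ • h' y - y = -(L⁻¹ • h' y) := by abel
  rw [hsub] at hdes
  have hinner : ⟪h' y, -(L⁻¹ • h' y)⟫ = -(L⁻¹ * ‖h' y‖ ^ 2) := by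
    rw [inner_neg_right, real_inner_smul_right, real_inner_self_eq_norm_sq]
  have hnorm : ‖-(L⁻¹ • h' y)‖ ^ 2 = L⁻¹ ^ 2 * ‖h' y‖ ^ 2 := by
    rw [norm_neg, norm_smul, Real.norm_eq_abs, abs_inv, abs_of_pos hL]
    ring
  rw [hinner, hnorm] at hdes
  have hmin' := hmin (y - L⁻¹ • h' y)
  have hdiff : h y - h x = f y - f x - ⟪f' x, y - x⟫ := by
    simp [hh, inner_sub_right]
    ring
  have hLne : L ≠ 0 := ne_of_gt hL
  have : L⁻¹ * ‖h' y‖ ^ 2 - L / 2 * (L⁻¹ ^ 2 * ‖h' y‖ ^ 2) = ‖h' y‖ ^ 2 / (2 * L) := by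
    field_simp
    ring
  have hfinal : ‖h' y‖ ^ 2 / (2 * L) ≤ h y - h x := by linarith
  rw [hdiff] at hfinal
  have h2L : (0:ℝ) < 2 * L := by linarith
  calc ‖f' y - f' x‖ ^ 2 = ‖h' y‖ ^ 2 := by rw [hh']
    _ ≤ 2 * L * (f y - f x - ⟪f' x, y - x⟫) := by
        rw [div_le_iff₀ h2L] at hfinal; linarith

end Aux

/-- Lemma: variance bound for stochastic gradients:
For `F(w) = (1/N) ∑ n, f n w` with each `f n` convex, differentiable with
`L`-Lipschitz gradient, `w⋆` a global minimizer of `F`, and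
`σ² = (1/N) ∑ n, ‖∇f n (w⋆)‖²`, the second moment of the stochastic gradient
(uniform index) satisfies
`(1/N) ∑ n, ‖∇f n w‖² ≤ 4L (F w - F w⋆) + 2σ²` for every `w`. -/
theorem stochastic_gradient_variance_bound
    {D N : ℕ} (hN : 0 < N)
    (f : Fin N → EuclideanSpace ℝ (Fin D) → ℝ)
    (f' : Fin N → EuclideanSpace ℝ (Fin D) → EuclideanSpace ℝ (Fin D))
    (hconv : ∀ n, ConvexOn ℝ Set.univ (f n))
    (hgrad : ∀ n x, HasGradientAt (f n) (f' n x) x)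
    (L : ℝ) (hL : 0 < L)
    (hlip : ∀ n x y, ‖f' n x - f' n y‖ ≤ L * ‖x - y‖)
    (F : EuclideanSpace ℝ (Fin D) → ℝ)
    (hF : F = fun w => (1 / (N : ℝ)) * ∑ n : Fin N, f n w)
    (wstar : EuclideanSpace ℝ (Fin D)) (hmin : ∀ w, F wstar ≤ F w)
    (σ2 : ℝ) (hσ2 : σ2 = (1 / (N : ℝ)) * ∑ n : Fin N, ‖f' n wstar‖ ^ 2) :
    ∀ w, (1 / (N : ℝ)) * ∑ n : Fin N, ‖f' n w‖ ^ 2 ≤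
      4 * L * (F w - F wstar) + 2 * σ2 := by
  intro w
  have hNpos : (0:ℝ) < N := Nat.cast_pos.mpr hN
  have hNne : (N:ℝ) ≠ 0 := ne_of_gt hNpos
  -- gradient of F at wstar
  have hFgrad : HasGradientAt F
      ((1/(N:ℝ)) • ∑ n : Fin N, f' n wstar) wstar := by
    rw [hF]
    apply hasGradientAt_iff_hasFDerivAt.mpr
    have hsum : HasFDerivAt (fun w => ∑ n : Fin N, f n w)
        (∑ n : Fin N, (InnerProductSpace.toDual ℝ _) (f' n wstar)) wstar :=
      HasFDerivAt.fun_sum (fun n _ => hasGradientAt_iff_hasFDerivAt.mp (hgrad n wstar))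
    have h1 := hsum.const_mul (1/(N:ℝ))
    rw [map_smul, map_sum]
    exact h1
  have hloc : IsLocalMin F wstar := Filter.Eventually.of_forall (fun x => hmin x)
  have hzero : (1/(N:ℝ)) • ∑ n : Fin N, f' n wstar = (0 : EuclideanSpace ℝ (Fin D)) := by
    have h0 := hloc.hasFDerivAt_eq_zero (hasGradientAt_iff_hasFDerivAt.mp hFgrad)
    have h1 := congrArg (InnerProductSpace.toDual ℝ (EuclideanSpace ℝ (Fin D))).symm h0
    simpa using h1
  have hsum0 : ∑ n : Fin N, f' n wstar = 0 :=
    (smul_eq_zero.mp hzero).resolve_left (by positivity)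
  -- per-index bound
  have key : ∀ n, ‖f' n w‖ ^ 2 ≤
      4 * L * (f n w - f n wstar - ⟪f' n wstar, w - wstar⟫) + 2 * ‖f' n wstar‖ ^ 2 := by
    intro n
    have hco := cocoercive hL (hconv n) (hgrad n) (hlip n) wstar w
    have htri : ‖f' n w‖ ≤ ‖f' n w - f' n wstar‖ + ‖f' n wstar‖ := by
      simpa using norm_add_le (f' n w - f' n wstar) (f' n wstar)
    have hsq : ‖f' n w‖ ^ 2 ≤ (‖f' n w - f' n wstar‖ + ‖f' n wstar‖) ^ 2 :=
      pow_le_pow_left₀ (norm_nonneg _) htri 2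
    nlinarith [sq_nonneg (‖f' n w - f' n wstar‖ - ‖f' n wstar‖)]
  have hip : ∑ n : Fin N, ⟪f' n wstar, w - wstar⟫ = 0 := by
    rw [← sum_inner, hsum0, inner_zero_left]
  have hsumineq : ∑ n : Fin N, ‖f' n w‖ ^ 2 ≤
      4 * L * ((∑ n : Fin N, f n w) - ∑ n : Fin N, f n wstar)
        + 2 * ∑ n : Fin N, ‖f' n wstar‖ ^ 2 := by
    calc ∑ n : Fin N, ‖f' n w‖ ^ 2
        ≤ ∑ n : Fin N, (4 * L * (f n w - f n wstar - ⟪f' n wstar, w - wstar⟫)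
            + 2 * ‖f' n wstar‖ ^ 2) := Finset.sum_le_sum (fun n _ => key n)
      _ = 4 * L * ((∑ n : Fin N, f n w) - ∑ n : Fin N, f n wstar)
            + 2 * ∑ n : Fin N, ‖f' n wstar‖ ^ 2 := by
          rw [Finset.sum_add_distrib, ← Finset.mul_sum, ← Finset.mul_sum]
          rw [Finset.sum_sub_distrib, Finset.sum_sub_distrib, hip]
          ring
  rw [hF, hσ2]
  simp only
  calc (1/(N:ℝ)) * ∑ n : Fin N, ‖f' n w‖ ^ 2
      ≤ (1/(N:ℝ)) * (4 * L * ((∑ n : Fin N, f n w) - ∑ n : Fin N, f n wstar)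
          + 2 * ∑ n : Fin N, ‖f' n wstar‖ ^ 2) :=
        mul_le_mul_of_nonneg_left hsumineq (by positivity)
    _ = 4 * L * ((1/(N:ℝ)) * ∑ n : Fin N, f n w - (1/(N:ℝ)) * ∑ n : Fin N, f n wstar)
          + 2 * ((1/(N:ℝ)) * ∑ n : Fin N, ‖f' n wstar‖ ^ 2) := by ring
end

section
/- Let F : ℝ^D → ℝ be differentiable and L-smooth. Fix w_t ∈ ℝ^D and a step size η_t > 0. Let g_t be a square-integrable random vector with E[g_t] = ∇F(w_t), let Q_t be a square-integrable random vector with E[Q_t | g_t] = g_t, and set w_{t+1} := w_t − η_t Q_t. Then E[F(w_{t+1})] − F(w_t) ≤ −η_t ‖∇F(w_t)‖₂² + (L/2) η_t² E[‖g_t‖₂²] + (L/2) η_t² E[‖Q_t − g_t‖₂²]. -/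
open MeasureTheory

/-- one-step descent inequality with compressed gradients:
Let `F : ℝ^D → ℝ` be differentiable and `L`-smooth, `w_t` a point, `η_t > 0` a step
size. Let `g_t` be a square-integrable random vector with `E[g_t] = ∇F(w_t)`, and
`Q_t` a square-integrable random vector with `E[Q_t | g_t] = g_t`; set
`w_{t+1} = w_t - η_t Q_t`. Then
`E[F(w_{t+1})] - F(w_t) ≤ -η_t ‖∇F(w_t)‖² + (L/2) η_t² E[‖g_t‖²] + (L/2) η_t² E[‖Q_t - g_t‖²]`. -/
theorem compressed_sgd_descent_step
    {D : ℕ} {Ω : Type*} [MeasurableSpace Ω]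
    (μ : Measure Ω) [IsProbabilityMeasure μ]
    (F : EuclideanSpace ℝ (Fin D) → ℝ)
    (F' : EuclideanSpace ℝ (Fin D) → EuclideanSpace ℝ (Fin D))
    (hgrad : ∀ x, HasGradientAt F (F' x) x)
    (L : ℝ) (hL : 0 < L)
    (hsmooth : ∀ x y, F y - F x - inner ℝ (F' x) (y - x) ≤ L / 2 * ‖y - x‖ ^ 2)
    (wt : EuclideanSpace ℝ (Fin D)) (ηt : ℝ) (hη : 0 < ηt)
    (g Q : Ω → EuclideanSpace ℝ (Fin D))
    (hgmeas : Measurable g) (hQmeas : Measurable Q)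
    (hg2 : MemLp g 2 μ) (hQ2 : MemLp Q 2 μ)
    (hgmean : ∫ ω, g ω ∂μ = F' wt)
    (hcond : μ[Q | MeasurableSpace.comap g inferInstance] =ᵐ[μ] g)
    (hFint : Integrable (fun ω => F (wt - ηt • Q ω)) μ) :
    ∫ ω, F (wt - ηt • Q ω) ∂μ - F wt ≤
      -ηt * ‖F' wt‖ ^ 2 + L / 2 * ηt ^ 2 * ∫ ω, ‖g ω‖ ^ 2 ∂μ +
        L / 2 * ηt ^ 2 * ∫ ω, ‖Q ω - g ω‖ ^ 2 ∂μ := by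
  have hm : MeasurableSpace.comap g inferInstance ≤ _ := hgmeas.comap_le
  haveI : SigmaFinite (μ.trim hm) := by
    have : IsFiniteMeasure (μ.trim hm) := isFiniteMeasure_trim hm
    infer_instance
  have hQ1 : Integrable Q μ := hQ2.integrable one_le_two
  have hg1 : Integrable g μ := hg2.integrable one_le_two
  -- integrability of squares
  have hQnorm2 : Integrable (fun ω => ‖Q ω‖ ^ 2) μ :=
    (memLp_two_iff_integrable_sq_norm hQ2.1).mp hQ2
  have hgnorm2 : Integrable (fun ω => ‖g ω‖ ^ 2) μ :=
    (memLp_two_iff_integrable_sq_norm hg2.1).mp hg2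
  have hQg2m : MemLp (fun ω => Q ω - g ω) 2 μ := hQ2.sub hg2
  have hQgnorm2 : Integrable (fun ω => ‖Q ω - g ω‖ ^ 2) μ :=
    (memLp_two_iff_integrable_sq_norm hQg2m.1).mp hQg2m
  -- E[Q] = E[g] = F' wt
  have hEQ : ∫ ω, Q ω ∂μ = F' wt := by
    rw [← hgmean, ← integral_condExp hm (f := Q)]
    exact integral_congr_ae hcond
  -- key cross-term identity : ∫ ⟪g, Q⟫ = ∫ ‖g‖^2
  have hgm : Measurable[(MeasurableSpace.comap g inferInstance)] g := fun s hs => ⟨s, hs, rfl⟩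
  set fQ := hQ2.toLp Q with hfQ
  set fg := hg2.toLp g with hfg
  have hfg_meas : AEStronglyMeasurable[MeasurableSpace.comap g inferInstance] (fg : Ω → EuclideanSpace ℝ (Fin D)) μ :=
    ⟨g, hgm.stronglyMeasurable, hg2.coeFn_toLp⟩
  have hcL2 : ((condExpL2 (EuclideanSpace ℝ (Fin D)) ℝ hm fQ : Ω →₂[μ] EuclideanSpace ℝ (Fin D)) : Ω → EuclideanSpace ℝ (Fin D)) =ᵐ[μ] g := by
    have h1 : ((condExpL2 (EuclideanSpace ℝ (Fin D)) ℝ hm fQ : Ω →₂[μ] EuclideanSpace ℝ (Fin D)) : Ω → EuclideanSpace ℝ (Fin D)) =ᵐ[μ] μ[Q|(MeasurableSpace.comap g inferInstance)] := by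
      refine ae_eq_condExp_of_forall_setIntegral_eq hm hQ1
        (fun s _ hμs => integrableOn_Lp_of_measure_ne_top _ (by norm_num) hμs.ne)
        (fun s hs hμs => ?_) (lpMeas.aestronglyMeasurable _)
      rw [integral_condExpL2_eq hm fQ hs hμs.ne]
      exact setIntegral_congr_ae (hm s hs) (hQ2.coeFn_toLp.mono fun x hx _ => hx)
    exact h1.trans hcond
  have hcross : ∫ ω, (inner ℝ (g ω) (Q ω) : ℝ) ∂μ = ∫ ω, ‖g ω‖ ^ 2 ∂μ := by
    have h2 : (inner ℝ (condExpL2 (EuclideanSpace ℝ (Fin D)) ℝ hm fQ : Ω →₂[μ] EuclideanSpace ℝ (Fin D)) fg : ℝ) = inner ℝ fQ fg :=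
      inner_condExpL2_eq_inner_fun hm fQ fg hfg_meas
    rw [L2.inner_def, L2.inner_def] at h2
    have e1 : ∫ ω, (inner ℝ ((fQ : Ω → EuclideanSpace ℝ (Fin D)) ω) ((fg : Ω → EuclideanSpace ℝ (Fin D)) ω) : ℝ) ∂μ
        = ∫ ω, (inner ℝ (Q ω) (g ω) : ℝ) ∂μ := by
      refine integral_congr_ae ?_
      filter_upwards [hQ2.coeFn_toLp, hg2.coeFn_toLp] with ω h1 h2
      rw [h1, h2]
    have e2 : ∫ ω, (inner ℝ (((condExpL2 (EuclideanSpace ℝ (Fin D)) ℝ hm fQ : Ω →₂[μ] EuclideanSpace ℝ (Fin D)) : Ω → EuclideanSpace ℝ (Fin D)) ω)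
        ((fg : Ω → EuclideanSpace ℝ (Fin D)) ω) : ℝ) ∂μ = ∫ ω, ‖g ω‖ ^ 2 ∂μ := by
      refine integral_congr_ae ?_
      filter_upwards [hcL2, hg2.coeFn_toLp] with ω h1 h2
      rw [h1, h2, real_inner_self_eq_norm_sq]
    rw [e1, e2] at h2
    have e3 : ∫ ω, (inner ℝ (g ω) (Q ω) : ℝ) ∂μ = ∫ ω, (inner ℝ (Q ω) (g ω) : ℝ) ∂μ :=
      integral_congr_ae (Filter.Eventually.of_forall fun ω => real_inner_comm _ _)
    rw [e3]; exact h2.symm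
  -- hence ∫ ‖Q‖² = ∫ ‖g‖² + ∫ ‖Q-g‖²
  have hinner_int : Integrable (fun ω => (inner ℝ (g ω) (Q ω - g ω) : ℝ)) μ := by
    have := L2.integrable_inner (𝕜 := ℝ) (hg2.toLp g) (hQg2m.toLp _)
    refine this.congr ?_
    filter_upwards [hg2.coeFn_toLp, hQg2m.coeFn_toLp] with ω h1 h2
    rw [h1, h2]
  have hinner_gQ : Integrable (fun ω => (inner ℝ (g ω) (Q ω) : ℝ)) μ := by
    have := L2.integrable_inner (𝕜 := ℝ) (hg2.toLp g) (hQ2.toLp Q)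
    refine this.congr ?_
    filter_upwards [hg2.coeFn_toLp, hQ2.coeFn_toLp] with ω h1 h2
    rw [h1, h2]
  have hcross0 : ∫ ω, (inner ℝ (g ω) (Q ω - g ω) : ℝ) ∂μ = 0 := by
    simp_rw [inner_sub_right, real_inner_self_eq_norm_sq]
    rw [integral_sub hinner_gQ hgnorm2, hcross, sub_self]
  have hQsq : ∫ ω, ‖Q ω‖ ^ 2 ∂μ
      = ∫ ω, ‖g ω‖ ^ 2 ∂μ + ∫ ω, ‖Q ω - g ω‖ ^ 2 ∂μ := by
    have pt : ∀ ω, ‖Q ω‖ ^ 2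
        = ‖g ω‖ ^ 2 + 2 * (inner ℝ (g ω) (Q ω - g ω) : ℝ) + ‖Q ω - g ω‖ ^ 2 := by
      intro ω
      calc ‖Q ω‖ ^ 2 = ‖g ω + (Q ω - g ω)‖ ^ 2 := by
            rw [show g ω + (Q ω - g ω) = Q ω from by abel]
        _ = _ := norm_add_sq_real _ _
    have hab : Integrable
        (fun ω => ‖g ω‖ ^ 2 + 2 * (inner ℝ (g ω) (Q ω - g ω) : ℝ)) μ :=
      hgnorm2.add (hinner_int.const_mul 2)
    simp_rw [pt]
    rw [integral_add hab hQgnorm2, integral_add hgnorm2 (hinner_int.const_mul 2),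
      integral_const_mul, hcross0]
    ring
  -- pointwise smoothness bound
  have key : ∀ ω, F (wt - ηt • Q ω) - F wt
      ≤ -ηt * (inner ℝ (F' wt) (Q ω) : ℝ) + L / 2 * ηt ^ 2 * ‖Q ω‖ ^ 2 := by
    intro ω
    have h := hsmooth wt (wt - ηt • Q ω)
    have h1 : wt - ηt • Q ω - wt = -(ηt • Q ω) := by abel
    rw [h1, inner_neg_right, real_inner_smul_right, norm_neg, norm_smul] at h
    have h2 : (‖ηt‖ * ‖Q ω‖) ^ 2 = ηt ^ 2 * ‖Q ω‖ ^ 2 := by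
      rw [Real.norm_eq_abs, abs_of_pos hη]; ring
    rw [h2] at h
    nlinarith [h]
  -- integrate
  have hrhs_int : Integrable (fun ω =>
      -ηt * (inner ℝ (F' wt) (Q ω) : ℝ) + L / 2 * ηt ^ 2 * ‖Q ω‖ ^ 2) μ :=
    (((hQ2.const_inner (F' wt)).integrable one_le_two).const_mul _).add
      (hQnorm2.const_mul _)
  have hmono : ∫ ω, (F (wt - ηt • Q ω) - F wt) ∂μ
      ≤ ∫ ω, (-ηt * (inner ℝ (F' wt) (Q ω) : ℝ) + L / 2 * ηt ^ 2 * ‖Q ω‖ ^ 2) ∂μ :=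
    integral_mono (hFint.sub (integrable_const _)) hrhs_int key
  rw [integral_sub hFint (integrable_const _), integral_const, probReal_univ] at hmono
  simp only [ENNReal.toReal_one, one_smul, smul_eq_mul] at hmono
  have hEinner : ∫ ω, (inner ℝ (F' wt) (Q ω) : ℝ) ∂μ = ‖F' wt‖ ^ 2 := by
    rw [integral_inner hQ1, hEQ, real_inner_self_eq_norm_sq]
  rw [integral_add (((hQ2.const_inner (F' wt)).integrable one_le_two).const_mul _)
      (hQnorm2.const_mul _), integral_const_mul, integral_const_mul, hEinner, hQsq] at hmono
  nlinarith [hmono]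
end

section
/- Let F : ℝ^D → ℝ be differentiable, L-smooth, and λ-strongly convex (0 < λ ≤ L) with global minimizer w⋆. Consider the stochastic iteration w_{t+1} = w_t − η_t v_t starting from w_0, where, conditionally on the past, E[v_t] = ∇F(w_t) and E[‖v_t‖₂²] ≤ C·( 4L·(F(w_t) − F(w⋆)) + 2σ² ) for constants C ≥ 1 and σ² > 0, and where the step sizes are η_t = α/(λ·(t + ακ)) with κ := 2LC/λ, for a constant α > 1 such that η_t ≤ 1/(2LC) for all t ≥ 0. Then there exist a constant K > 0 and an index t₀ ∈ ℕ such that for all t ≥ t₀: E[‖w_{t+1} − w⋆‖₂²] ≤ K · (α²σ²/λ²) · 1/(t − t₀ + ακ); in particular E[‖w_t − w⋆‖₂²] = O(1/t). -/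
open MeasureTheory
open scoped RealInnerProductSpace ENNReal

theorem aux_grad_zero {D : ℕ} (F : EuclideanSpace ℝ (Fin D) → ℝ)
    (F' : EuclideanSpace ℝ (Fin D) → EuclideanSpace ℝ (Fin D)) (L : ℝ) (hL : 0 < L)
    (hsmooth : ∀ x y, F y - F x - ⟪F' x, y - x⟫ ≤ L / 2 * ‖y - x‖ ^ 2)
    (wstar : EuclideanSpace ℝ (Fin D)) (hmin : ∀ x, F wstar ≤ F x) : F' wstar = 0 := by
  set g := F' wstar with hg
  set c : ℝ := 1/L with hc
  have hcpos : 0 < c := one_div_pos.2 hL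
  have hcL : c * L = 1 := by rw [hc]; field_simp
  have h := hsmooth wstar (wstar - c • g)
  have h1 : wstar - c • g - wstar = -(c • g) := by abel
  rw [h1] at h
  have h2 : ⟪g, -(c • g)⟫ = -(c * ‖g‖^2) := by
    rw [inner_neg_right, real_inner_smul_right, real_inner_self_eq_norm_sq]
  have h3 : ‖-(c • g)‖^2 = c^2 * ‖g‖^2 := by
    rw [norm_neg, norm_smul, mul_pow]
    simp [abs_of_pos hcpos]
  rw [h2, h3] at h
  have h4 := hmin (wstar - c • g)
  have e : L/2 * (c^2 * ‖g‖^2) = c/2 * ‖g‖^2 := by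
    linear_combination (c * ‖g‖^2 / 2) * hcL
  have h6 : ‖g‖^2 ≤ 0 := by nlinarith
  have : ‖g‖ = 0 := by nlinarith [sq_nonneg ‖g‖, norm_nonneg g]
  simpa using norm_eq_zero.mp this

theorem aux_rec (A : ℕ → ℝ) (hA0 : ∀ t, 0 ≤ A t) (α κ B : ℝ) (hα : 1 < α)
    (hκ : 1 < κ) (hB : 0 ≤ B)
    (hrec : ∀ t : ℕ, A (t+1) ≤ (1 - α/((t:ℝ) + α*κ)) * A t + B/((t:ℝ) + α*κ)^2) :
    ∀ t : ℕ, A t ≤ max (α*κ * A 0) (B/(α-1)) / ((t:ℝ) + α*κ) := by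
  set ν := max (α*κ * A 0) (B/(α-1)) with hν
  have hαpos : (0:ℝ) < α := lt_trans one_pos hα
  have hακ : (0:ℝ) < α*κ := mul_pos hαpos (lt_trans one_pos hκ)
  have hνA0 : α*κ * A 0 ≤ ν := le_max_left _ _
  have hνB : B ≤ (α-1)*ν := by
    have h1 : B/(α-1) ≤ ν := le_max_right _ _
    have h2 : (0:ℝ) < α - 1 := by linarith
    calc B = (α-1) * (B/(α-1)) := by field_simp
    _ ≤ (α-1)*ν := by nlinarith
  have hνpos : 0 ≤ ν := le_trans (mul_nonneg hακ.le (hA0 0)) hνA0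
  intro t
  induction t with
  | zero =>
    simp only [Nat.cast_zero, zero_add]
    rw [le_div_iff₀ hακ]
    linarith [hνA0]
  | succ t ih =>
    set s : ℝ := (t:ℝ) + α*κ with hs
    have hspos : (0:ℝ) < s := by positivity
    have hsα : α < s := by
      have : α < α*κ := by nlinarith
      have ht : (0:ℝ) ≤ (t:ℝ) := Nat.cast_nonneg t
      linarith
    have hfrac : 0 ≤ 1 - α/s := by
      rw [sub_nonneg, div_le_one hspos]; exact hsα.le
    have step1 : (1 - α/s) * A t ≤ (1 - α/s) * (ν/s) :=
      mul_le_mul_of_nonneg_left ih hfrac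
    have step2 : B/s^2 ≤ (α-1)*ν/s^2 := by
      apply div_le_div_of_nonneg_right hνB ?_ |>.trans_eq rfl
      · positivity
    have hcomb : (1 - α/s) * (ν/s) + (α-1)*ν/s^2 = (s-1)*ν/s^2 := by
      field_simp; ring
    have hfinal : (s-1)*ν/s^2 ≤ ν/(s+1) := by
      rw [div_le_div_iff₀ (by positivity) (by linarith)]
      nlinarith
    have hsucc : ((t:ℕ)+1 : ℝ) + α*κ = s + 1 := by push_cast; rw [hs]; ring
    calc A (t+1) ≤ (1 - α/s) * A t + B/s^2 := hrec t
    _ ≤ (1 - α/s) * (ν/s) + (α-1)*ν/s^2 := by linarith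
    _ = (s-1)*ν/s^2 := hcomb
    _ ≤ ν/(s+1) := hfinal
    _ = ν/(((t:ℕ)+1:ℝ) + α*κ) := by rw [hsucc]
    _ = ν/(((t+1 : ℕ):ℝ) + α*κ) := by push_cast; ring_nf

theorem aux_inner_condexp {Ω : Type*} {m : MeasurableSpace Ω} [m0 : MeasurableSpace Ω]
    (μ : Measure Ω) [IsProbabilityMeasure μ] {D : ℕ} (hm : m ≤ m0)
    (g v h : Ω → EuclideanSpace ℝ (Fin D))
    (hgm : StronglyMeasurable[m] g) (hg2 : MemLp g 2 μ)
    (hv2 : MemLp v 2 μ) (hcm : μ[v|m] =ᵐ[μ] h) :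
    Integrable (fun ω => ⟪g ω, v ω⟫) μ ∧ Integrable (fun ω => ⟪g ω, h ω⟫) μ ∧
    ∫ ω, ⟪g ω, v ω⟫ ∂μ = ∫ ω, ⟪g ω, h ω⟫ ∂μ := by
  have hvint : Integrable v μ := hv2.integrable one_le_two
  have hvi_int : ∀ i : Fin D, Integrable (fun ω => v ω i) μ := fun i =>
    (EuclideanSpace.proj i : EuclideanSpace ℝ (Fin D) →L[ℝ] ℝ).integrable_comp hvint
  have hvi2 : ∀ i : Fin D, MemLp (fun ω => v ω i) 2 μ := fun i =>
    (EuclideanSpace.proj i : EuclideanSpace ℝ (Fin D) →L[ℝ] ℝ).comp_memLp' hv2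
  have hgi2 : ∀ i : Fin D, MemLp (fun ω => g ω i) 2 μ := fun i =>
    (EuclideanSpace.proj i : EuclideanSpace ℝ (Fin D) →L[ℝ] ℝ).comp_memLp' hg2
  have hgim : ∀ i : Fin D, StronglyMeasurable[m] (fun ω => g ω i) := fun i =>
    (EuclideanSpace.proj i : EuclideanSpace ℝ (Fin D) →L[ℝ] ℝ).continuous.comp_stronglyMeasurable hgm
  have hci : ∀ i : Fin D, (fun ω => (μ[v|m]) ω i) =ᵐ[μ] μ[(fun ω => v ω i)|m] := by
    intro i
    refine ae_eq_condExp_of_forall_setIntegral_eq hm (hvi_int i)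
      (fun s _ _ => ((EuclideanSpace.proj i :
        EuclideanSpace ℝ (Fin D) →L[ℝ] ℝ).integrable_comp integrable_condExp).integrableOn)
      (fun s hs hμs => ?_) ?_
    · have h1 : ∫ ω in s, (μ[v|m]) ω i ∂μ
          = (EuclideanSpace.proj i) (∫ ω in s, (μ[v|m]) ω ∂μ) :=
        (EuclideanSpace.proj i :
          EuclideanSpace ℝ (Fin D) →L[ℝ] ℝ).integral_comp_comm integrable_condExp.integrableOn
      have h2 : ∫ ω in s, v ω i ∂μ = (EuclideanSpace.proj i) (∫ ω in s, v ω ∂μ) :=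
        (EuclideanSpace.proj i :
          EuclideanSpace ℝ (Fin D) →L[ℝ] ℝ).integral_comp_comm hvint.integrableOn
      rw [h1, h2, setIntegral_condExp hm hvint hs]
    · exact StronglyMeasurable.aestronglyMeasurable ((EuclideanSpace.proj i : EuclideanSpace ℝ (Fin D) →L[ℝ] ℝ).continuous.comp_stronglyMeasurable
        stronglyMeasurable_condExp)
  have hprod_int : ∀ i : Fin D, Integrable (fun ω => g ω i * v ω i) μ := by
    intro i
    have := ((hgi2 i).smul (r := 1) (hvi2 i)).integrable le_rfl
    simpa [Pi.smul_apply', smul_eq_mul, mul_comm, Pi.mul_def] using this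
  have hkey : ∀ i : Fin D, ∫ ω, g ω i * v ω i ∂μ = ∫ ω, g ω i * h ω i ∂μ := by
    intro i
    have hpull := condExp_mul_of_stronglyMeasurable_left (μ := μ) (hgim i)
      (by simpa [Pi.mul_def] using hprod_int i) (hvi_int i)
    have e1 : ∫ ω, g ω i * v ω i ∂μ = ∫ ω, (μ[(fun ω => g ω i) * (fun ω => v ω i)|m]) ω ∂μ := by
      rw [integral_condExp hm]; rfl
    have e2 : (μ[(fun ω => g ω i) * (fun ω => v ω i)|m])
        =ᵐ[μ] fun ω => g ω i * h ω i := by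
      filter_upwards [hpull, hci i, hcm] with ω h1 h2 h3
      rw [h1]
      simp only [Pi.mul_apply]
      rw [← h2, h3]
    rw [e1, integral_congr_ae e2]
  have hprodh_int : ∀ i : Fin D, Integrable (fun ω => g ω i * h ω i) μ := by
    intro i
    have hpull := condExp_mul_of_stronglyMeasurable_left (μ := μ) (hgim i)
      (by simpa [Pi.mul_def] using hprod_int i) (hvi_int i)
    refine (integrable_condExp (f := (fun ω => g ω i) * (fun ω => v ω i)) (m := m)).congr ?_
    filter_upwards [hpull, hci i, hcm] with ω h1 h2 h3
    rw [h1]; simp only [Pi.mul_apply]; rw [← h2, h3]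
  have hinner : ∀ (a b : EuclideanSpace ℝ (Fin D)), ⟪a, b⟫ = ∑ i : Fin D, a i * b i := by
    intro a b
    simp [PiLp.inner_apply, RCLike.inner_apply, conj_trivial, mul_comm]
  have hintv : Integrable (fun ω => ⟪g ω, v ω⟫) μ := by
    have : (fun ω => ⟪g ω, v ω⟫) = fun ω => ∑ i : Fin D, g ω i * v ω i := by
      funext ω; exact hinner _ _
    rw [this]
    exact integrable_finset_sum _ (fun i _ => hprod_int i)
  have hinth : Integrable (fun ω => ⟪g ω, h ω⟫) μ := by
    have : (fun ω => ⟪g ω, h ω⟫) = fun ω => ∑ i : Fin D, g ω i * h ω i := by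
      funext ω; exact hinner _ _
    rw [this]
    exact integrable_finset_sum _ (fun i _ => hprodh_int i)
  refine ⟨hintv, hinth, ?_⟩
  calc ∫ ω, ⟪g ω, v ω⟫ ∂μ = ∫ ω, ∑ i : Fin D, g ω i * v ω i ∂μ := by
        simp_rw [hinner]
    _ = ∑ i : Fin D, ∫ ω, g ω i * v ω i ∂μ :=
        integral_finset_sum _ (fun i _ => hprod_int i)
    _ = ∑ i : Fin D, ∫ ω, g ω i * h ω i ∂μ := by
        exact Finset.sum_congr rfl (fun i _ => hkey i)
    _ = ∫ ω, ∑ i : Fin D, g ω i * h ω i ∂μ :=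
        (integral_finset_sum _ (fun i _ => hprodh_int i)).symm
    _ = ∫ ω, ⟪g ω, h ω⟫ ∂μ := by simp_rw [hinner]

set_option maxHeartbeats 1000000 in
/-- Theorem: O(1/t) convergence of compressed TNG-SGD for strongly
convex objectives: Let `F : ℝ^D → ℝ` be differentiable, `L`-smooth and `λ`-strongly
convex (`0 < λ ≤ L`) with global minimizer `w⋆`. Consider the iteration
`w_{t+1} = w_t - η_t v_t` from `w_0`, where, conditionally on the past
(the σ-algebra `𝔉 t` generated by `v_0, …, v_{t-1}`), `E[v_t | 𝔉 t] = ∇F(w_t)` and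
`E[‖v_t‖² | 𝔉 t] ≤ C (4L (F(w_t) - F(w⋆)) + 2σ²)` with `C ≥ 1`, `σ² > 0`, and where
`η_t = α / (λ (t + ακ))` with `κ = 2LC/λ` and `α > 1` such that `η_t ≤ 1/(2LC)` for
every `t`. Then there are `K > 0` and `t₀ ∈ ℕ` such that for all `t ≥ t₀`,
`E[‖w_{t+1} - w⋆‖²] ≤ K (α²σ²/λ²) / (t - t₀ + ακ)`; in particular
`E[‖w_t - w⋆‖²] = O(1/t)`. -/
theorem tng_sgd_strongly_convex_convergence
    {D : ℕ} {Ω : Type*} [MeasurableSpace Ω]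
    (μ : Measure Ω) [IsProbabilityMeasure μ]
    (F : EuclideanSpace ℝ (Fin D) → ℝ)
    (F' : EuclideanSpace ℝ (Fin D) → EuclideanSpace ℝ (Fin D))
    (hgrad : ∀ x, HasGradientAt F (F' x) x)
    (L lam : ℝ) (hlam : 0 < lam) (hlamL : lam ≤ L)
    (hsmooth : ∀ x y, F y - F x - ⟪F' x, y - x⟫ ≤ L / 2 * ‖y - x‖ ^ 2)
    (hsc : ∀ x y, lam / 2 * ‖y - x‖ ^ 2 ≤ F y - F x - ⟪F' x, y - x⟫)
    (wstar : EuclideanSpace ℝ (Fin D)) (hmin : ∀ x, F wstar ≤ F x)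
    (C σ2 : ℝ) (hC : 1 ≤ C) (hσ2 : 0 < σ2)
    (α κ : ℝ) (hα : 1 < α) (hκ : κ = 2 * L * C / lam)
    (η : ℕ → ℝ) (hη : ∀ t : ℕ, η t = α / (lam * ((t : ℝ) + α * κ)))
    (hηle : ∀ t : ℕ, η t ≤ 1 / (2 * L * C))
    (v : ℕ → Ω → EuclideanSpace ℝ (Fin D))
    (hvmeas : ∀ t, Measurable (v t)) (hv2 : ∀ t, MemLp (v t) 2 μ)
    (w0 : EuclideanSpace ℝ (Fin D)) (w : ℕ → Ω → EuclideanSpace ℝ (Fin D))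
    (hw0 : w 0 = fun _ => w0)
    (hwrec : ∀ t : ℕ, w (t + 1) = fun ω => w t ω - η t • v t ω)
    -- `𝔉 t` is the σ-algebra generated by `v 0, …, v (t-1)`
    (𝔉 : ℕ → MeasurableSpace Ω)
    (h𝔉 : ∀ t : ℕ, 𝔉 t =
      MeasurableSpace.comap (fun ω => (fun i : Fin t => v i ω)) inferInstance)
    (hcondmean : ∀ t : ℕ, μ[v t | 𝔉 t] =ᵐ[μ] fun ω => F' (w t ω))
    (hcondvar : ∀ t : ℕ, ∀ᵐ ω ∂μ,
      (μ[fun ω' => ‖v t ω'‖ ^ 2 | 𝔉 t]) ω ≤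
        C * (4 * L * (F (w t ω) - F wstar) + 2 * σ2)) :
    ∃ K > (0 : ℝ), ∃ t₀ : ℕ, ∀ t : ℕ, t₀ ≤ t →
      ∫ ω, ‖w (t + 1) ω - wstar‖ ^ 2 ∂μ ≤
        K * (α ^ 2 * σ2 / lam ^ 2) * (1 / ((t : ℝ) - (t₀ : ℝ) + α * κ)) := by
  have hL : 0 < L := lt_of_lt_of_le hlam hlamL
  have hC0 : 0 < C := lt_of_lt_of_le one_pos hC
  have hκpos : 0 < κ := by rw [hκ]; positivity
  have hκ1 : 1 < κ := by
    rw [hκ, lt_div_iff₀ hlam]; nlinarith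
  have hαpos : (0:ℝ) < α := lt_trans one_pos hα
  have hακ : (0:ℝ) < α * κ := mul_pos hαpos hκpos
  have hηpos : ∀ t : ℕ, 0 < η t := by
    intro t; rw [hη t]
    have : (0:ℝ) < (t:ℝ) + α * κ := by positivity
    positivity
  -- measurability infrastructure
  have hP : ∀ t : ℕ, Measurable[𝔉 t] (fun ω => (fun i : Fin t => v i ω)) := by
    intro t; rw [h𝔉 t]; exact Measurable.of_comap_le le_rfl
  have hle : ∀ t : ℕ, 𝔉 t ≤ ‹MeasurableSpace Ω› := by
    intro t; rw [h𝔉 t]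
    exact (measurable_pi_lambda (fun ω (i : Fin t) => v i ω) (fun i => hvmeas i)).comap_le
  have hmono : ∀ t : ℕ, 𝔉 t ≤ 𝔉 (t+1) := by
    intro t
    rw [h𝔉 t, h𝔉 (t+1)]
    have : (fun ω => (fun i : Fin t => v i ω)) =
        (fun x : Fin (t+1) → EuclideanSpace ℝ (Fin D) => fun i : Fin t => x i.castSucc) ∘
        (fun ω => (fun i : Fin (t+1) => v i ω)) := by
      funext ω; funext i; simp [Fin.castSucc]
    rw [this, ← MeasurableSpace.comap_comp]
    exact MeasurableSpace.comap_mono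
      ((measurable_pi_lambda _ (fun i => measurable_pi_apply i.castSucc)).comap_le)
  have hvF : ∀ t : ℕ, Measurable[𝔉 (t+1)] (v t) := by
    intro t
    have : v t = (fun x : Fin (t+1) → EuclideanSpace ℝ (Fin D) => x (Fin.last t)) ∘
        (fun ω => (fun i : Fin (t+1) => v i ω)) := by
      funext ω; simp [Fin.last]
    rw [this]
    exact (measurable_pi_apply (Fin.last t)).comp (hP (t+1))
  have hwF : ∀ t : ℕ, Measurable[𝔉 t] (w t) := by
    intro t
    induction t with
    | zero => rw [hw0]; exact measurable_const
    | succ t ih =>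
      rw [hwrec t]
      exact ((ih.mono (hmono t) le_rfl).sub ((hvF t).const_smul (η t)))
  have hwmeas : ∀ t : ℕ, Measurable (w t) := fun t => (hwF t).mono (hle t) le_rfl
  have hwL2 : ∀ t : ℕ, MemLp (w t) 2 μ := by
    intro t
    induction t with
    | zero => rw [hw0]; exact memLp_const _
    | succ t ih =>
      rw [hwrec t]
      exact ih.sub ((hv2 t).const_smul (η t))
  -- integrability infrastructure
  have hgL2 : ∀ t : ℕ, MemLp (fun ω => w t ω - wstar) 2 μ :=
    fun t => (hwL2 t).sub (memLp_const wstar)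
  have hgsq_int : ∀ t : ℕ, Integrable (fun ω => ‖w t ω - wstar‖^2) μ :=
    fun t => (hgL2 t).norm.integrable_sq
  have hvsq_int : ∀ t : ℕ, Integrable (fun ω => ‖v t ω‖^2) μ :=
    fun t => (hv2 t).norm.integrable_sq
  have hgz : F' wstar = 0 := aux_grad_zero F F' L hL hsmooth wstar hmin
  have hFub : ∀ x, F x - F wstar ≤ L/2 * ‖x - wstar‖^2 := by
    intro x
    have h := hsmooth wstar x
    rw [hgz] at h
    simpa using h
  have hFlb : ∀ x, 0 ≤ F x - F wstar := fun x => sub_nonneg.2 (hmin x)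
  have hFcont : Continuous F := by
    rw [continuous_iff_continuousAt]
    exact fun x => (hgrad x).hasFDerivAt.continuousAt
  have hFw_int : ∀ t : ℕ, Integrable (fun ω => F (w t ω) - F wstar) μ := by
    intro t
    refine Integrable.mono' ((hgsq_int t).const_mul (L/2))
      (((hFcont.measurable.comp (hwmeas t)).sub measurable_const).aestronglyMeasurable) ?_
    filter_upwards with ω
    rw [Real.norm_eq_abs, abs_of_nonneg (hFlb _)]
    exact hFub _
  -- inner product identity via conditional expectation
  have hinner_all : ∀ t : ℕ,
      Integrable (fun ω => ⟪w t ω - wstar, v t ω⟫) μ ∧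
      Integrable (fun ω => ⟪w t ω - wstar, F' (w t ω)⟫) μ ∧
      ∫ ω, ⟪w t ω - wstar, v t ω⟫ ∂μ = ∫ ω, ⟪w t ω - wstar, F' (w t ω)⟫ ∂μ := by
    intro t
    exact aux_inner_condexp μ (hle t) (fun ω => w t ω - wstar) (v t) (fun ω => F' (w t ω))
      ((hwF t).sub measurable_const).stronglyMeasurable (hgL2 t) (hv2 t) (hcondmean t)
  -- the one-step recursion
  set A : ℕ → ℝ := fun t => ∫ ω, ‖w t ω - wstar‖^2 ∂μ with hA
  have hA0 : ∀ t, 0 ≤ A t := fun t => integral_nonneg (fun ω => by positivity)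
  set Φ : ℕ → ℝ := fun t => ∫ ω, (F (w t ω) - F wstar) ∂μ with hΦ
  have hΦ0 : ∀ t, 0 ≤ Φ t := fun t => integral_nonneg (fun ω => hFlb _)
  have hstep : ∀ t : ℕ, A (t+1) ≤ (1 - lam * η t) * A t + 2*C*σ2*(η t)^2 := by
    intro t
    obtain ⟨hint_v, hint_h, hinner_eq⟩ := hinner_all t
    have hf2 : Integrable (fun ω => 2*η t*⟪w t ω - wstar, v t ω⟫) μ := by
      exact hint_v.const_mul (2*η t)
    have hf12 : Integrable
        (fun ω => ‖w t ω - wstar‖^2 - 2*η t*⟪w t ω - wstar, v t ω⟫) μ := by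
      exact (hgsq_int t).sub (hint_v.const_mul (2*η t))
    have hf3 : Integrable (fun ω => (η t)^2*‖v t ω‖^2) μ := by
      exact (hvsq_int t).const_mul ((η t)^2)
    -- pointwise expansion
    have hpt : ∀ ω, ‖w (t+1) ω - wstar‖^2 =
        ‖w t ω - wstar‖^2 - 2*η t*⟪w t ω - wstar, v t ω⟫ + (η t)^2*‖v t ω‖^2 := by
      intro ω
      rw [hwrec t]
      have h1 : w t ω - η t • v t ω - wstar = (w t ω - wstar) - η t • v t ω := by abel
      rw [h1, norm_sub_sq_real, real_inner_smul_right, norm_smul, mul_pow]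
      simp only [Real.norm_eq_abs, sq_abs]
      ring
    have hIexp : A (t+1) = A t - 2*η t * (∫ ω, ⟪w t ω - wstar, v t ω⟫ ∂μ)
        + (η t)^2 * (∫ ω, ‖v t ω‖^2 ∂μ) := by
      show (∫ ω, ‖w (t+1) ω - wstar‖^2 ∂μ) = _
      calc (∫ ω, ‖w (t+1) ω - wstar‖^2 ∂μ)
          = ∫ ω, (‖w t ω - wstar‖^2 - 2*η t*⟪w t ω - wstar, v t ω⟫
              + (η t)^2*‖v t ω‖^2) ∂μ :=
            integral_congr_ae (Filter.Eventually.of_forall (fun ω => hpt ω))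
        _ = (∫ ω, (‖w t ω - wstar‖^2 - 2*η t*⟪w t ω - wstar, v t ω⟫) ∂μ)
              + ∫ ω, (η t)^2*‖v t ω‖^2 ∂μ := integral_add hf12 hf3
        _ = ((∫ ω, ‖w t ω - wstar‖^2 ∂μ) - ∫ ω, 2*η t*⟪w t ω - wstar, v t ω⟫ ∂μ)
              + ∫ ω, (η t)^2*‖v t ω‖^2 ∂μ := by
            rw [integral_sub (hgsq_int t) hf2]
        _ = A t - 2*η t * (∫ ω, ⟪w t ω - wstar, v t ω⟫ ∂μ)
              + (η t)^2 * (∫ ω, ‖v t ω‖^2 ∂μ) := by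
            rw [integral_const_mul, integral_const_mul]
    -- lower bound on the inner product integral
    have hptlb : ∀ ω, F (w t ω) - F wstar + lam/2 * ‖w t ω - wstar‖^2 ≤
        ⟪w t ω - wstar, F' (w t ω)⟫ := by
      intro ω
      have h := hsc (w t ω) wstar
      have e1 : ⟪F' (w t ω), wstar - w t ω⟫ = -⟪F' (w t ω), w t ω - wstar⟫ := by
        rw [show wstar - w t ω = -(w t ω - wstar) by abel, inner_neg_right]
      have e2 : ⟪w t ω - wstar, F' (w t ω)⟫ = ⟪F' (w t ω), w t ω - wstar⟫ :=
        real_inner_comm _ _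
      have e3 : ‖wstar - w t ω‖ = ‖w t ω - wstar‖ := norm_sub_rev _ _
      rw [e1, e3] at h
      have h4 := hmin (w t ω)
      rw [e2]
      linarith
    have hsum_int : Integrable
        (fun ω => F (w t ω) - F wstar + lam/2 * ‖w t ω - wstar‖^2) μ := by
      exact (hFw_int t).add ((hgsq_int t).const_mul (lam/2))
    have hI1 : Φ t + lam/2 * A t ≤ ∫ ω, ⟪w t ω - wstar, v t ω⟫ ∂μ := by
      rw [hinner_eq]
      have hmono' : ∫ ω, (F (w t ω) - F wstar + lam/2 * ‖w t ω - wstar‖^2) ∂μ ≤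
          ∫ ω, ⟪w t ω - wstar, F' (w t ω)⟫ ∂μ :=
        integral_mono_ae hsum_int hint_h (Filter.Eventually.of_forall hptlb)
      have hsplit : ∫ ω, (F (w t ω) - F wstar + lam/2 * ‖w t ω - wstar‖^2) ∂μ
          = Φ t + lam/2 * A t := by
        calc ∫ ω, (F (w t ω) - F wstar + lam/2 * ‖w t ω - wstar‖^2) ∂μ
            = (∫ ω, (F (w t ω) - F wstar) ∂μ) + ∫ ω, lam/2 * ‖w t ω - wstar‖^2 ∂μ :=
              integral_add (hFw_int t) ((hgsq_int t).const_mul (lam/2))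
          _ = Φ t + lam/2 * A t := by rw [integral_const_mul]
      rw [← hsplit]
      exact hmono'
    -- upper bound on the second moment integral
    have hRint2 : Integrable (fun ω => 4 * L * (F (w t ω) - F wstar) + 2 * σ2) μ := by
      exact ((hFw_int t).const_mul (4*L)).add (integrable_const _)
    have hRint : Integrable (fun ω => C * (4 * L * (F (w t ω) - F wstar) + 2 * σ2)) μ := by
      exact hRint2.const_mul C
    have hI2 : ∫ ω, ‖v t ω‖^2 ∂μ ≤ C*(4*L*(Φ t) + 2*σ2) := by
      have e0 : ∫ ω, ‖v t ω‖^2 ∂μ = ∫ ω, (μ[fun ω' => ‖v t ω'‖ ^ 2 | 𝔉 t]) ω ∂μ :=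
        (integral_condExp (hle t)).symm
      rw [e0]
      calc ∫ ω, (μ[fun ω' => ‖v t ω'‖ ^ 2 | 𝔉 t]) ω ∂μ
          ≤ ∫ ω, C * (4 * L * (F (w t ω) - F wstar) + 2 * σ2) ∂μ :=
            integral_mono_ae integrable_condExp hRint (hcondvar t)
        _ = C * ∫ ω, (4 * L * (F (w t ω) - F wstar) + 2 * σ2) ∂μ := by
            rw [integral_const_mul]
        _ = C * ((∫ ω, 4 * L * (F (w t ω) - F wstar) ∂μ) + ∫ (_ : Ω), 2 * σ2 ∂μ) := by
            rw [integral_add ((hFw_int t).const_mul (4*L)) (integrable_const _)]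
        _ = C*(4*L*(Φ t) + 2*σ2) := by
            rw [integral_const_mul, integral_const]
            simp [measure_univ, hΦ]
    -- combine
    have h4LC : 4*L*C*(η t) ≤ 2 := by
      have := hηle t
      have h2LC : (0:ℝ) < 2*L*C := by positivity
      rw [le_div_iff₀ h2LC] at this
      nlinarith
    have hηt := hηpos t
    have e3 : (η t)^2*(4*L*C*(Φ t)) ≤ η t * (2*(Φ t)) := by
      have ee : (η t)^2*(4*L*C*(Φ t)) = (4*L*C*(η t)) * (η t * Φ t) := by ring
      rw [ee, show η t * (2*(Φ t)) = 2 * (η t * Φ t) by ring]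
      exact mul_le_mul_of_nonneg_right h4LC (mul_nonneg hηt.le (hΦ0 t))
    have e1 : 2*η t*(Φ t + lam/2 * A t) ≤ 2*η t*(∫ ω, ⟪w t ω - wstar, v t ω⟫ ∂μ) :=
      mul_le_mul_of_nonneg_left hI1 (by positivity)
    have e2 : (η t)^2*(∫ ω, ‖v t ω‖^2 ∂μ) ≤ (η t)^2*(C*(4*L*(Φ t) + 2*σ2)) :=
      mul_le_mul_of_nonneg_left hI2 (by positivity)
    have efin : (η t)^2*(C*(4*L*(Φ t) + 2*σ2)) =
        (η t)^2*(4*L*C*(Φ t)) + 2*C*σ2*(η t)^2 := by ring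
    rw [hIexp]
    nlinarith [e1, e2, e3, efin, hΦ0 t]
  -- convert to the aux_rec form
  set B : ℝ := 2*C*σ2*α^2/lam^2 with hB
  have hBpos : 0 < B := by rw [hB]; positivity
  have hrec' : ∀ t : ℕ, A (t+1) ≤ (1 - α/((t:ℝ) + α*κ)) * A t + B/((t:ℝ) + α*κ)^2 := by
    intro t
    have hden : (0:ℝ) < (t:ℝ) + α*κ := by positivity
    have e1 : 1 - lam * η t = 1 - α/((t:ℝ) + α*κ) := by
      rw [hη t]; field_simp
    have e2 : 2*C*σ2*(η t)^2 = B/((t:ℝ) + α*κ)^2 := by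
      have hlam' : lam ≠ 0 := ne_of_gt hlam
      have hden' : ((t:ℝ) + α*κ) ≠ 0 := ne_of_gt hden
      rw [hη t, hB]
      field_simp
    calc A (t+1) ≤ (1 - lam * η t) * A t + 2*C*σ2*(η t)^2 := hstep t
    _ = (1 - α/((t:ℝ) + α*κ)) * A t + B/((t:ℝ) + α*κ)^2 := by rw [e1, e2]
  have hall := aux_rec A hA0 α κ B hα hκ1 hBpos.le hrec'
  set ν : ℝ := max (α*κ * A 0) (B/(α-1)) with hν
  have hνpos : 0 < ν :=
    lt_of_lt_of_le (div_pos hBpos (by linarith : (0:ℝ) < α - 1)) (le_max_right _ _)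
  have hKpos : 0 < ν * lam^2/(α^2*σ2) := by
    exact div_pos (mul_pos hνpos (by positivity : (0:ℝ) < lam^2)) (by positivity)
  refine ⟨ν * lam^2/(α^2*σ2), hKpos, 0, ?_⟩
  intro t _
  have hlam' : lam ≠ 0 := ne_of_gt hlam
  have hσ2' : σ2 ≠ 0 := ne_of_gt hσ2
  have hα' : α ≠ 0 := ne_of_gt hαpos
  have hKν : ν * lam^2/(α^2*σ2) * (α ^ 2 * σ2 / lam ^ 2) = ν := by
    field_simp
  rw [hKν]
  have h1 := hall (t+1)
  have hden : (0:ℝ) < (t:ℝ) + α*κ := by positivity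
  have hden1 : ((t+1:ℕ):ℝ) + α*κ = (t:ℝ) + 1 + α*κ := by push_cast; ring
  rw [hden1] at h1
  have h2 : ν/((t:ℝ) + 1 + α*κ) ≤ ν/((t:ℝ) + α*κ) :=
    div_le_div_of_nonneg_left hνpos.le hden (by linarith)
  have h3 : (t:ℝ) - ((0:ℕ):ℝ) + α*κ = (t:ℝ) + α*κ := by push_cast; ring
  rw [h3, mul_one_div]
  exact le_trans h1 h2
end
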